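/- Let p ∈ ℝ with p ∉ {−(k+1)/2 : k ∈ ℕ₀}, let P = [[κ₁,κ₃],[κ₃,κ₂]] be a real symmetric 2×2 matrix with κ₁ ≠ 0, let ψ ∈ ℝ, and let ((αₙ,βₙ))ₙ≥₀ be the unique solution of the recurrence (R). Then β₁ ≠ 0, and (P,ψ) is recovered from (α₁,β₁),(α₂,β₂) by: κ₁ = β₁(1+2p); κ₂ = −(α₁β₂/β₁²)·2(1+2p) + (α₁²/β₁)(1+2p) + (β₂²/β₁³)(2+2p) − 2α₂/β₁; κ₃ = (β₂/β₁)(2+2p) − α₁(1+2p); ψ = (β₂/β₁²)(2+2p) − (α₁/β₁)·2p. -/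

import Mathlib

open Matrix MeasureTheory Filter

noncomputable section

def matJ : Matrix (Fin 2) (Fin 2) ℝ := !![0, -1; 1, 0]

def Dpsi (p ψ a : ℝ) : Matrix (Fin 2) (Fin 2) ℝ :=
  if p = 0 then !![1, 0; ψ * Real.log a, 1]
  else !![1, 0; ψ / (2 * p), 1] * !![a ^ p, 0; 0, a ^ (-p)] * !![1, 0; -ψ / (2 * p), 1]

def HPpsi (p ψ : ℝ) (P : Matrix (Fin 2) (Fin 2) ℝ) (a : ℝ) : Matrix (Fin 2) (Fin 2) ℝ :=
  Dpsi p ψ a * P * (Dpsi p ψ a)ᵀ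

def SatRec (p : ℝ) (P : Matrix (Fin 2) (Fin 2) ℝ) (ψ : ℝ) (α β : ℕ → ℝ) : Prop :=
  α 0 = 1 ∧ β 0 = 0 ∧ ∀ n : ℕ,
    !![α (n + 1), β (n + 1)] =
      (-1 / (((n : ℝ) + 1) * (2 * p + (n : ℝ) + 1))) •
        (!![α n, β n] * (P * matJ * !![2 * p + (n : ℝ) + 1, 0; ψ, (n : ℝ) + 1]))

def genF (c : ℕ → ℝ) (z : ℂ) : ℂ := ∑' n : ℕ, (c n : ℂ) * z ^ n

def rowAB (p ψ : ℝ) (α β : ℕ → ℝ) (a : ℝ) (z : ℂ) : Matrix (Fin 1) (Fin 2) ℂ :=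
  !![((a ^ p : ℝ) : ℂ) * genF α ((a : ℂ) * z), ((a ^ p : ℝ) : ℂ) * genF β ((a : ℂ) * z)] *
    ((Dpsi p ψ a)⁻¹).map Complex.ofReal

/-!
The first two steps of the recurrence are linear in κ₁, κ₂, κ₃, ψ and can be solved one after
the other: the β-step at n = 0 gives κ₁ = (1 + 2p) β₁, the α-step at n = 0 gives κ₃ = β₁ ψ − α₁,
the β-step at n = 1 then determines κ₃ and hence ψ, and the α-step at n = 1 determines κ₂.
The excluded values of p are exactly the zeros of the denominators 2p + n + 1.
-/

namespace SatRec

variable {p ψ : ℝ} {P : Matrix (Fin 2) (Fin 2) ℝ} {α β : ℕ → ℝ}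

theorem beta_succ (h : SatRec p P ψ α β) (n : ℕ) (hn : 2 * p + n + 1 ≠ 0) :
    (2 * p + n + 1) * β (n + 1) = α n * P 0 0 + β n * P 1 0 := by
  have hβ := congrFun (congrFun (h.2.2 n) 0) 1
  simp only [of_apply, cons_val', cons_val_zero, cons_val_one, empty_val', cons_val_fin_one,
    Matrix.smul_apply, smul_eq_mul, mul_apply, Fin.sum_univ_two, matJ] at hβ
  rw [hβ]
  field_simp
  ring

theorem alpha_succ (h : SatRec p P ψ α β) (n : ℕ) (hn : 2 * p + n + 1 ≠ 0) :
    (n + 1) * (2 * p + n + 1) * α (n + 1) =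
      α n * (P 0 0 * ψ - P 0 1 * (2 * p + n + 1)) + β n * (P 1 0 * ψ - P 1 1 * (2 * p + n + 1)) := by
  have hα := congrFun (congrFun (h.2.2 n) 0) 0
  simp only [of_apply, cons_val', cons_val_zero, cons_val_one, empty_val', cons_val_fin_one,
    Matrix.smul_apply, smul_eq_mul, mul_apply, Fin.sum_univ_two, matJ] at hα
  rw [hα]
  field_simp
  ring

end SatRec

/-- recovery of the parameters (P,ψ) from the first two terms of
the solution of the recurrence. -/
theorem statement6 (p : ℝ) (hp : ∀ k : ℕ, p ≠ -((k : ℝ) + 1) / 2)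
    (κ1 κ2 κ3 ψ : ℝ) (hκ1 : κ1 ≠ 0) (α β : ℕ → ℝ)
    (hrec : SatRec p !![κ1, κ3; κ3, κ2] ψ α β) :
    β 1 ≠ 0 ∧
    κ1 = β 1 * (1 + 2 * p) ∧
    κ2 = -(α 1 * β 2 / (β 1) ^ 2) * (2 * (1 + 2 * p)) + (α 1) ^ 2 / β 1 * (1 + 2 * p)
        + (β 2) ^ 2 / (β 1) ^ 3 * (2 + 2 * p) - 2 * α 2 / β 1 ∧
    κ3 = β 2 / β 1 * (2 + 2 * p) - α 1 * (1 + 2 * p) ∧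
    ψ = β 2 / (β 1) ^ 2 * (2 + 2 * p) - α 1 / β 1 * (2 * p) := by
  have hden (k : ℕ) : 2 * p + k + 1 ≠ 0 := fun h => hp k (by linarith)
  have hβ1 := hrec.beta_succ 0 (hden 0)
  have hβ2 := hrec.beta_succ 1 (hden 1)
  have hα1 := hrec.alpha_succ 0 (hden 0)
  have hα2 := hrec.alpha_succ 1 (hden 1)
  simp only [hrec.1, hrec.2.1, of_apply, cons_val', cons_val_zero, cons_val_one, cons_val_fin_one,
    Nat.cast_zero, Nat.cast_one, add_zero, zero_add, one_mul, zero_mul] at hβ1 hβ2 hα1 hα2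
  have hβ1_ne : β 1 ≠ 0 := fun h => hκ1 (by rw [← hβ1, h, mul_zero])
  have hκ1_eq : κ1 = β 1 * (1 + 2 * p) := by linear_combination -hβ1
  have hκ3_psi : κ3 = β 1 * ψ - α 1 :=
    mul_left_cancel₀ (hden 0) (by push_cast; linear_combination hα1 + ψ * hκ1_eq)
  have hκ3 : κ3 * β 1 = β 2 * (2 + 2 * p) - α 1 * (1 + 2 * p) * β 1 := by
    linear_combination -hβ2 - α 1 * hκ1_eq
  have hψ : ψ * β 1 ^ 2 = β 2 * (2 + 2 * p) - α 1 * β 1 * (2 * p) := by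
    linear_combination -β 1 * hκ3_psi + hκ3
  have hκ2 : κ2 * β 1 = ψ * β 2 - α 1 * κ3 - 2 * α 2 := by
    refine mul_left_cancel₀ (hden 1) ?_
    push_cast
    linear_combination hα2 - ψ * hβ2
  refine ⟨hβ1_ne, hκ1_eq, ?_, ?_, ?_⟩
  · field_simp
    linear_combination β 1 ^ 2 * hκ2 + β 2 * hψ - β 1 * α 1 * hκ3
  · field_simp
    linear_combination hκ3
  · field_simp
    linear_combination hψ
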